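/- arXiv:1503.00941 — 2 statements merged into one kernel-verified Lean document; each statement's English description precedes it below -/
import Mathlib

section
/- (Monotonicity property) For every agent i with an additive valuation over a finite set M of goods, every n ≥ 2, and every single good j ∈ M, it holds that μ_i(n − 1, M \ {j}) ≥ μ_i(n, M). -/
/-!
Given any partition of `M` into `n` bundles, drop the good `j` and merge the
bundle that contained it into another one. Every one of the resulting `n - 1` bundles
contains an original bundle, so (values being nonnegative) the minimum bundle value
does not decrease.
-/

/-- `P` is a partition of the finite set `S` of goods into `n`
(possibly empty) pairwise disjoint bundles. -/
def IsPartition {ι : Type*} [DecidableEq ι] (n : ℕ) (S : Finset ι)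
    (P : Fin n → Finset ι) : Prop :=
  (∀ i j : Fin n, i ≠ j → Disjoint (P i) (P j)) ∧ Finset.univ.biUnion P = S

/-- The `n`-maximin share of an agent with additive valuation given by item
values `v` with respect to the finite set `S` of goods:
`μ(n, S) = max over partitions of S into n bundles of the minimum bundle value`. -/
noncomputable def mms {ι : Type*} [DecidableEq ι] (n : ℕ) (S : Finset ι)
    (v : ι → ℝ) : ℝ :=
  sSup {x : ℝ | ∃ P : Fin n → Finset ι,
    IsPartition n S P ∧ x = ⨅ j : Fin n, (P j).sum v}

open Finset

section

variable {ι : Type*} [DecidableEq ι] {n m : ℕ} {S : Finset ι}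

def mergeBundles (P : Fin n → Finset ι) (f : Fin n → Fin m) (i : Fin m) : Finset ι :=
  ({l | f l = i} : Finset (Fin n)).biUnion P

theorem subset_mergeBundles (P : Fin n → Finset ι) (f : Fin n → Fin m) (l : Fin n) :
    P l ⊆ mergeBundles P f (f l) :=
  subset_biUnion_of_mem P (by simp)

namespace IsPartition

theorem subset {P : Fin n → Finset ι} (hP : IsPartition n S P) (i : Fin n) : P i ⊆ S :=
  hP.2 ▸ subset_biUnion_of_mem P (mem_univ i)

theorem exists_mem {P : Fin n → Finset ι} (hP : IsPartition n S P) {a : ι} (ha : a ∈ S) :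
    ∃ k, a ∈ P k := by
  simpa [← hP.2] using ha

theorem erase {P : Fin n → Finset ι} (hP : IsPartition n S P) (a : ι) :
    IsPartition n (S.erase a) (fun i => (P i).erase a) := by
  refine ⟨fun i i' hne => (hP.1 i i' hne).mono (erase_subset _ _) (erase_subset _ _), ?_⟩
  ext x
  simp [← hP.2]

theorem mergeBundles {P : Fin n → Finset ι} (hP : IsPartition n S P) (f : Fin n → Fin m) :
    IsPartition m S (mergeBundles P f) := by
  refine ⟨fun i i' hne => ?_, ?_⟩
  · refine (disjoint_biUnion_left _ _ _).2 fun l hl =>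
      (disjoint_biUnion_right _ _ _).2 fun l' hl' => ?_
    refine hP.1 l l' fun h => hne ?_
    simp only [mem_filter] at hl hl'
    rw [← hl.2, ← hl'.2, h]
  · ext x
    simp [_root_.mergeBundles, ← hP.2]

end IsPartition

theorem exists_isPartition (hn : 0 < n) (S : Finset ι) : ∃ P, IsPartition n S P := by
  refine ⟨fun i => if i = ⟨0, hn⟩ then S else ∅, fun i i' hne => ?_, ?_⟩
  · by_cases hi : i = ⟨0, hn⟩
    · simp [hi, Ne.symm (hi ▸ hne)]
    · simp [hi]
  · ext x
    simp only [mem_biUnion, mem_univ, true_and]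
    refine ⟨fun ⟨i, hx⟩ => ?_, fun hx => ⟨⟨0, hn⟩, by simpa⟩⟩
    split_ifs at hx <;> simp_all

theorem finite_setOf_isPartition (n : ℕ) (S : Finset ι) :
    {P | IsPartition n S P}.Finite :=
  (Set.Finite.pi fun _ => S.powerset.finite_toSet).subset fun _ hP i _ =>
    mem_coe.2 (mem_powerset.2 (hP.subset i))

theorem le_mms {P : Fin n → Finset ι} (hP : IsPartition n S P) (v : ι → ℝ) :
    ⨅ i, (P i).sum v ≤ mms n S v := by
  refine le_csSup ?_ ⟨P, hP, rfl⟩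
  refine (((finite_setOf_isPartition n S).image fun Q => ⨅ i, (Q i).sum v).subset ?_).bddAbove
  rintro _ ⟨Q, hQ, rfl⟩
  exact ⟨Q, hQ, rfl⟩

theorem mms_le (hn : 0 < n) (v : ι → ℝ) {c : ℝ}
    (h : ∀ P, IsPartition n S P → ⨅ i, (P i).sum v ≤ c) : mms n S v ≤ c := by
  obtain ⟨P, hP⟩ := exists_isPartition hn S
  refine csSup_le ⟨_, P, hP, rfl⟩ ?_
  rintro _ ⟨Q, hQ, rfl⟩
  exact h Q hQ

end

/-- Monotonicity property: removing a single good `j` and one agent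
does not decrease the maximin share: `μ(n − 1, M \ {j}) ≥ μ(n, M)`. -/
theorem mms_monotonicity {ι : Type*} [DecidableEq ι]
    (n : ℕ) (hn : 2 ≤ n) (M : Finset ι) (j : ι) (hj : j ∈ M)
    (v : ι → ℝ) (hv : ∀ k ∈ M, 0 ≤ v k) :
    mms n M v ≤ mms (n - 1) (M.erase j) v := by
  obtain ⟨m, rfl⟩ : ∃ m, n = m + 2 := ⟨n - 2, by omega⟩
  refine mms_le (by omega) v fun P hP => ?_
  obtain ⟨k, hjk⟩ := hP.exists_mem hj
  -- `f` merges bundle `k` into another one; new bundle `i` contains old bundle `k.succAbove i`.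
  set f := Function.invFun k.succAbove
  have hf : Function.LeftInverse f k.succAbove :=
    Function.leftInverse_invFun Fin.succAbove_right_injective
  let Q i := (mergeBundles P f i).erase j
  have hQ : IsPartition (m + 1) (M.erase j) Q := (hP.mergeBundles f).erase j
  refine le_trans (le_ciInf fun i => ?_) (le_mms hQ v)
  have hsub : P (k.succAbove i) ⊆ Q i := by
    refine subset_erase.2 ⟨?_, fun hj' => ?_⟩
    · simpa only [hf i] using subset_mergeBundles P f (k.succAbove i)
    · exact disjoint_left.1 (hP.1 _ _ (Fin.succAbove_ne k i).symm) hjk hj'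
  calc ⨅ l, (P l).sum v ≤ (P (k.succAbove i)).sum v :=
        ciInf_le (Set.finite_range _).bddBelow _
    _ ≤ (Q i).sum v := sum_le_sum_of_subset_of_nonneg hsub fun x hx _ =>
        hv x (mem_of_mem_erase (hQ.subset i hx))
end

section
/- Under the stated hypotheses on v_2, μ_2, (A_1, A_2, A_3), (A'_1, A'_2, A'_3), F_1, F_2, F_3, C_1, C_2, if additionally max{ v_2(C_1), v_2(F_3) + v_2(C_2) } < (7/8)μ_2, then min{ v_2(F_1) + v_2(C_1), v_2(F_2) + v_2(F_3) + v_2(C_2) } ≥ (7/8)μ_2. -/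
/-!
Summing the three bundles of `(A 0, A 1, A 2)` gives `v(M) ≥ 3μ`, since `v(M)` is also the sum
of the three bundles of the maximin partition `A'`. With `A 0 = C₁ ∪ C₂`,
`A 2 = F 0 ∪ F 1 ∪ F 2` and `v(A 1) < 7μ/8`, both claimed bounds become linear consequences of
`hmax`, `v(A 2) < 7μ/8` and the ordering of the `F i`.
-/

namespace IsPartition

variable {ι : Type*} [DecidableEq ι] {n : ℕ} {S : Finset ι} {P : Fin n → Finset ι}

theorem sum_eq (hP : IsPartition n S P) (v : ι → ℝ) : S.sum v = ∑ i, (P i).sum v := by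
  rw [← hP.2, Finset.sum_biUnion fun i _ j _ hij ↦ hP.1 i j hij]

theorem inter_of_subset (hP : IsPartition n S P) {T : Finset ι} (hT : T ⊆ S) :
    IsPartition n T fun i ↦ P i ∩ T :=
  ⟨fun i j hij ↦ (hP.1 i j hij).mono Finset.inter_subset_left Finset.inter_subset_left,
    by rw [← Finset.biUnion_inter, hP.2, Finset.inter_eq_right.2 hT]⟩

theorem nsmul_le_sum (hP : IsPartition n S P) (v : ι → ℝ) {μ : ℝ}
    (hμ : ∀ i, μ ≤ (P i).sum v) : n * μ ≤ S.sum v := by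
  simpa [hP.sum_eq v] using Finset.card_nsmul_le_sum Finset.univ _ μ fun i _ ↦ hμ i

end IsPartition

theorem claim_sums_seven_eighths_second_general {ι : Type*} [DecidableEq ι]
    (M : Finset ι) (v : ι → ℝ)
    (μ : ℝ)
    -- (A 0, A 1, A 2) is a partition of M whose last two bundles are small
    (A : Fin 3 → Finset ι) (hA : IsPartition 3 M A)
    (hA2 : (A 1).sum v < 7 / 8 * μ) (hA3 : (A 2).sum v < 7 / 8 * μ)
    -- (A' 0, A' 1, A' 2) is a 3-maximin partition of M w.r.t. v
    (A' : Fin 3 → Finset ι) (hA' : IsPartition 3 M A')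
    (hA'opt : min ((A' 0).sum v) (min ((A' 1).sum v) ((A' 2).sum v)) = μ)
    -- F i = A' i ∩ A 2, indexed so that v(F 0) ≤ v(F 1) ≤ v(F 2), and v(F 0) > μ/8
    (F : Fin 3 → Finset ι) (hF : ∀ i : Fin 3, F i = A' i ∩ A 2)
    (hF01 : (F 0).sum v ≤ (F 1).sum v) (hF12 : (F 1).sum v ≤ (F 2).sum v)
    (hF0 : μ / 8 < (F 0).sum v)
    -- (C₁, C₂) is a 2-maximin partition of A 0 w.r.t. v, with v(C₁) ≥ v(C₂)
    (C₁ C₂ : Finset ι) (hC : Disjoint C₁ C₂) (hCu : C₁ ∪ C₂ = A 0)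
    (hmax : max (C₁.sum v) ((F 2).sum v + C₂.sum v) < 7 / 8 * μ) :
    7 / 8 * μ ≤ min ((F 0).sum v + C₁.sum v) ((F 1).sum v + (F 2).sum v + C₂.sum v) := by
  have hA'μ : ∀ i, μ ≤ (A' i).sum v := by
    rw [← hA'opt]
    intro i
    fin_cases i <;> simp
  have htotal : 3 * μ ≤ (A 0).sum v + (A 1).sum v + (A 2).sum v := by
    simpa [hA.sum_eq v, Fin.sum_univ_three, add_assoc] using hA'.nsmul_le_sum v hA'μ
  have hA0 : (A 0).sum v = C₁.sum v + C₂.sum v := by rw [← hCu, Finset.sum_union hC]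
  have hA2F : (A 2).sum v = (F 0).sum v + (F 1).sum v + (F 2).sum v := by
    have hsub : A 2 ⊆ M := hA.2 ▸ Finset.subset_biUnion_of_mem A (Finset.mem_univ 2)
    rw [(hA'.inter_of_subset hsub).sum_eq v, Fin.sum_univ_three, hF 0, hF 1, hF 2]
  obtain ⟨hC₁, hF2C₂⟩ := max_lt_iff.1 hmax
  -- besides `htotal`: `v(F 1) < 3μ/8` (as `v(F 0) + 2 v(F 1) ≤ v(A 2) < 7μ/8`) for the first
  -- bound, `v(F 0) ≤ v(A 2) / 3 < 7μ/24` for the second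
  exact le_min (by linarith) (by linarith)

/-- under the stated hypotheses, if moreover
`max{v₂(C₁), v₂(F₃) + v₂(C₂)} < (7/8)μ₂`, then
`min{v₂(F₁) + v₂(C₁), v₂(F₂) + v₂(F₃) + v₂(C₂)} ≥ (7/8)μ₂`. -/
theorem claim_sums_seven_eighths_second {ι : Type*} [DecidableEq ι]
    (M : Finset ι) (v : ι → ℝ) (hv : ∀ j ∈ M, 0 ≤ v j)
    (μ : ℝ) (hμ : μ = mms 3 M v)
    -- every single good has value less than (7/8)μ₂
    (hitems : ∀ j ∈ M, v j < 7 / 8 * μ)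
    -- (A 0, A 1, A 2) is a partition of M whose last two bundles are small
    (A : Fin 3 → Finset ι) (hA : IsPartition 3 M A)
    (hA2 : (A 1).sum v < 7 / 8 * μ) (hA3 : (A 2).sum v < 7 / 8 * μ)
    -- (A' 0, A' 1, A' 2) is a 3-maximin partition of M w.r.t. v
    (A' : Fin 3 → Finset ι) (hA' : IsPartition 3 M A')
    (hA'opt : min ((A' 0).sum v) (min ((A' 1).sum v) ((A' 2).sum v)) = μ)
    -- F i = A' i ∩ A 2, indexed so that v(F 0) ≤ v(F 1) ≤ v(F 2), and v(F 0) > μ/8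
    (F : Fin 3 → Finset ι) (hF : ∀ i : Fin 3, F i = A' i ∩ A 2)
    (hF01 : (F 0).sum v ≤ (F 1).sum v) (hF12 : (F 1).sum v ≤ (F 2).sum v)
    (hF0 : μ / 8 < (F 0).sum v)
    -- (C₁, C₂) is a 2-maximin partition of A 0 w.r.t. v, with v(C₁) ≥ v(C₂)
    (C₁ C₂ : Finset ι) (hC : Disjoint C₁ C₂) (hCu : C₁ ∪ C₂ = A 0)
    (hCopt : min (C₁.sum v) (C₂.sum v) = mms 2 (A 0) v)
    (hC12 : C₂.sum v ≤ C₁.sum v)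
    (hmax : max (C₁.sum v) ((F 2).sum v + C₂.sum v) < 7 / 8 * μ) :
    7 / 8 * μ ≤ min ((F 0).sum v + C₁.sum v) ((F 1).sum v + (F 2).sum v + C₂.sum v) :=
  claim_sums_seven_eighths_second_general M v μ A hA hA2 hA3 A' hA' hA'opt F hF hF01 hF12 hF0 C₁ C₂
    hC hCu hmax
end
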